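/- There is a function κ : (0,∞) × (0,∞) → [0,1] with lim_{ε→0} κ(ε,α) = 1 for each fixed α > 0, such that: for any sequence V_n of d(n)-dimensional complex normed spaces (d(n) < ∞), with λ_n the Lebesgue measure on V_n normalized so that λ_n(Ball(V_n)) = 1, and sets A_n ⊆ Ball(V_n) with liminf_n λ_n(A_n)^{1/(2d(n))} ≥ α, one has liminf_n (1/d(n)) d_ε(A_n, ‖·‖_{V_n}) ≥ κ(ε,α). One can take κ(α,ε) = 1 - (log α - log 4 - log(2+4ε)) / log(ε/(2+4ε)). -/

import Mathlib

/-!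
If every point of `A ⊆ closedBall 0 1` lies within `ε` of a complex subspace `W` of dimension `k`,
then `A` is covered by the `2ε`-balls centred at an `ε`-net of the `(1 + ε)`-ball of `W`, and a
volumetric packing argument in `W ≃ ℝ^(2k)` gives such a net with at most `((2 + 3ε)/ε)^(2k)`
points. Hence `λ(A) ≤ ((2 + 3ε)/ε)^(2k) (2ε)^(2d)`, that is
`λ(A)^(1/(2d)) ≤ 2ε ((2 + 3ε)/ε)^(k/d)`, and passing to the `liminf` gives
`liminf k/d ≥ log_{(2+3ε)/ε} (α/(2ε))`, which tends to `1` as `ε → 0`.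
-/

open Filter MeasureTheory Metric

/-- `epsDim A ε` is the minimal (complex) dimension of a linear subspace `W` such that
every point of `A` is within distance `ε` of `W`. -/
noncomputable def epsDim {V : Type*} [NormedAddCommGroup V] [Module ℂ V]
    (A : Set V) (ε : ℝ) : ℕ :=
  sInf {k : ℕ | ∃ W : Submodule ℂ V, Module.finrank ℂ W = k ∧
    ∀ a ∈ A, ∃ w ∈ W, ‖a - w‖ < ε}

open Function Module
open scoped ENNReal NNReal Topology

theorem Metric.IsSeparated.encard_mul_measure_ball_le {E : Type*} [NormedAddCommGroup E]
    [MeasurableSpace E] [BorelSpace E]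
    (ν : Measure E) [ν.IsAddHaarMeasure] {C : Set E} {ε : ℝ≥0} {x : E} {R : ℝ}
    (hC : IsSeparated (ε : ℝ≥0∞) C) (hCR : C ⊆ closedBall x R) :
    (C.encard : ℝ≥0∞) * ν (ball 0 (ε / 2)) ≤ ν (ball x (R + ε / 2)) := by
  have hdisj : Pairwise (Disjoint on fun c : C ↦ ball (c : E) (ε / 2)) := by
    intro c c' hcc'
    refine ball_disjoint_ball ?_
    have : (ε : ℝ≥0∞) < edist (c : E) c' := hC c.2 c'.2 (Subtype.coe_ne_coe.2 hcc')
    rw [edist_nndist, ENNReal.coe_lt_coe, ← NNReal.coe_lt_coe, coe_nndist] at this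
    linarith
  calc (C.encard : ℝ≥0∞) * ν (ball 0 (ε / 2)) = ∑' c : C, ν (ball (c : E) (ε / 2)) := by
        simp only [Measure.addHaar_ball_center, ENNReal.tsum_const]; rfl
    _ ≤ ν (⋃ c : C, ball (c : E) (ε / 2)) :=
        tsum_meas_le_meas_iUnion_of_disjoint ν (fun _ ↦ measurableSet_ball) hdisj
    _ ≤ ν (ball x (R + ε / 2)) := by
        refine measure_mono (Set.iUnion_subset fun c ↦ ball_subset_ball' ?_)
        linarith [mem_closedBall.1 (hCR c.2)]

theorem Metric.packingNumber_ne_top_of_isCompact {X : Type*} [PseudoEMetricSpace X]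
    {ε : ℝ≥0} (hε : ε ≠ 0) {A : Set X} (hA : IsCompact A) : packingNumber ε A ≠ ⊤ := by
  obtain ⟨N, -, hN, hAN⟩ := exists_finite_isCover_of_isCompact (ε := ε / 2) (by simpa) hA
  refine (lt_of_le_of_lt ?_ hN.encard_lt_top).ne
  calc packingNumber ε A = packingNumber (2 * (ε / 2)) A := by
        rw [mul_div_cancel₀ _ two_ne_zero]
    _ ≤ externalCoveringNumber (ε / 2) A := packingNumber_two_mul_le_externalCoveringNumber _ _
    _ ≤ N.encard := hAN.externalCoveringNumber_le_encard

section Packing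

variable {E : Type*} [NormedAddCommGroup E] [NormedSpace ℝ E] [FiniteDimensional ℝ E]

theorem Metric.IsSeparated.encard_le_of_subset_closedBall {C : Set E} {ε : ℝ≥0} (hε : 0 < ε)
    {x : E} {R : ℝ} (hR : 0 ≤ R) (hC : IsSeparated (ε : ℝ≥0∞) C) (hCR : C ⊆ closedBall x R) :
    (C.encard : ℝ≥0∞) ≤ ENNReal.ofReal (((2 * R + ε) / ε) ^ finrank ℝ E) := by
  borelize E
  have key := hC.encard_mul_measure_ball_le Measure.addHaar hCR
  have hε2 : (0 : ℝ) < ε / 2 := by positivity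
  rw [Measure.addHaar_ball_of_pos _ _ hε2,
    Measure.addHaar_ball_of_pos _ x (r := R + ε / 2) (by positivity),
    ← mul_assoc, ENNReal.mul_le_mul_iff_left (measure_ball_pos _ _ one_pos).ne'
      measure_ball_lt_top.ne, ← ENNReal.le_div_iff_mul_le (by simp [hε2]) (by simp),
    ← ENNReal.ofReal_div_of_pos (by positivity), ← div_pow] at key
  convert key using 3
  field_simp

theorem exists_finite_cover_closedBall_encard_le {ε : ℝ} (hε : 0 < ε) (x : E) {R : ℝ}
    (hR : 0 ≤ R) : ∃ N : Set E, N.Finite ∧ closedBall x R ⊆ ⋃ y ∈ N, closedBall y ε ∧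
      (N.encard : ℝ≥0∞) ≤ ENNReal.ofReal (((2 * R + ε) / ε) ^ finrank ℝ E) := by
  lift ε to ℝ≥0 using hε.le
  set N := maximalSeparatedSet ε (closedBall x R)
  have hcard := (isSeparated_maximalSeparatedSet (ε := ε)).encard_le_of_subset_closedBall
    (by exact_mod_cast hε) hR (maximalSeparatedSet_subset (A := closedBall x R))
  refine ⟨N, ?_, ?_, hcard⟩
  · exact Set.encard_lt_top_iff.1 <|
      ENat.toENNReal_lt_top.1 (hcard.trans_lt ENNReal.ofReal_lt_top)
  · exact isCover_iff_subset_iUnion_closedBall.1 <| isCover_maximalSeparatedSet <|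
      packingNumber_ne_top_of_isCompact (by exact_mod_cast hε.ne') (isCompact_closedBall x R)

end Packing

theorem MeasureTheory.Measure.addHaar_le_encard_mul_of_subset_iUnion_closedBall {E : Type*}
    [NormedAddCommGroup E] [MeasurableSpace E] [BorelSpace E] (μ : Measure E)
    [μ.IsAddHaarMeasure] {A N : Set E} {δ : ℝ} (hN : N.Countable)
    (hAN : A ⊆ ⋃ y ∈ N, closedBall y δ) :
    μ A ≤ N.encard * μ (closedBall 0 δ) :=
  calc μ A ≤ μ (⋃ y ∈ N, closedBall y δ) := measure_mono hAN
    _ ≤ ∑' y : N, μ (closedBall (y : E) δ) := measure_biUnion_le μ hN _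
    _ = N.encard * μ (closedBall 0 δ) := by
        simp only [Measure.addHaar_closedBall_center, ENNReal.tsum_const]; rfl

theorem MeasureTheory.Measure.addHaar_le_of_forall_exists_mem_submodule {E : Type*}
    [NormedAddCommGroup E] [NormedSpace ℝ E] [FiniteDimensional ℝ E] [MeasurableSpace E]
    [BorelSpace E] (μ : Measure E) [μ.IsAddHaarMeasure] {A : Set E} {W : Submodule ℝ E}
    {r ε : ℝ} (hr : 0 ≤ r) (hε : 0 < ε) (hA : A ⊆ closedBall 0 r)
    (hAW : ∀ a ∈ A, ∃ w ∈ W, ‖a - w‖ < ε) :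
    μ A ≤ ENNReal.ofReal (((2 * r + 3 * ε) / ε) ^ finrank ℝ W) * μ (closedBall 0 (2 * ε)) := by
  obtain ⟨N, hN, hcover, hcard⟩ :=
    exists_finite_cover_closedBall_encard_le (E := W) hε 0 (R := r + ε) (by positivity)
  have hAN : A ⊆ ⋃ y ∈ (↑) '' N, closedBall (y : E) (2 * ε) := by
    intro a ha
    obtain ⟨w, hw, haw⟩ := hAW a ha
    have hwr : (⟨w, hw⟩ : W) ∈ closedBall 0 (r + ε) := by
      rw [mem_closedBall_zero_iff, Submodule.coe_norm]
      calc ‖w‖ ≤ ‖a‖ + ‖w - a‖ := norm_le_norm_add_norm_sub' w a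
        _ = ‖a‖ + ‖a - w‖ := by rw [norm_sub_rev]
        _ ≤ r + ε := add_le_add (mem_closedBall_zero_iff.1 (hA ha)) haw.le
    obtain ⟨y, hy, hwy⟩ := Set.mem_iUnion₂.1 (hcover hwr)
    refine Set.mem_iUnion₂.2 ⟨y, Set.mem_image_of_mem _ hy, ?_⟩
    calc dist a y ≤ dist a w + dist w y := dist_triangle _ _ _
      _ ≤ 2 * ε := by
        rw [dist_eq_norm a]
        linarith [mem_closedBall.1 hwy, Subtype.dist_eq ⟨w, hw⟩ y]
  calc μ A ≤ ((↑) '' N : Set E).encard * μ (closedBall 0 (2 * ε)) :=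
        μ.addHaar_le_encard_mul_of_subset_iUnion_closedBall (hN.image _).countable hAN
    _ ≤ N.encard * μ (closedBall 0 (2 * ε)) := by
        gcongr
        exact Set.encard_image_le _ _
    _ ≤ _ := by
        rw [show 2 * r + 3 * ε = 2 * (r + ε) + ε by ring]
        gcongr

theorem Real.rpow_one_div_le_of_le_pow_mul_pow {t a b : ℝ} {k d : ℕ} (ht : 0 ≤ t) (ha : 0 ≤ a)
    (hb : 0 ≤ b) (hd : d ≠ 0) (h : t ≤ a ^ k * b ^ d) :
    t ^ (1 / (d : ℝ)) ≤ b * a ^ ((k : ℝ) / d) :=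
  calc t ^ (1 / (d : ℝ)) ≤ (a ^ k * b ^ d) ^ (1 / (d : ℝ)) := by gcongr
    _ = b * a ^ ((k : ℝ) / d) := by
        rw [Real.mul_rpow (by positivity) (by positivity), one_div,
          Real.pow_rpow_inv_natCast hb hd, ← Real.rpow_natCast, ← Real.rpow_mul ha, mul_comm,
          div_eq_mul_inv]

section EpsDim

variable {V : Type*} [NormedAddCommGroup V] [Module ℂ V] {A : Set V} {ε : ℝ}

theorem epsDim_le_finrank (hε : 0 < ε) : epsDim A ε ≤ finrank ℂ V :=
  Nat.sInf_le ⟨⊤, finrank_top ℂ V, fun a _ ↦ ⟨a, Submodule.mem_top, by simpa using hε⟩⟩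

theorem exists_submodule_finrank_eq_epsDim (hε : 0 < ε) : ∃ W : Submodule ℂ V,
    finrank ℂ W = epsDim A ε ∧ ∀ a ∈ A, ∃ w ∈ W, ‖a - w‖ < ε :=
  Nat.sInf_mem (s := {k | ∃ W : Submodule ℂ V, finrank ℂ W = k ∧
      ∀ a ∈ A, ∃ w ∈ W, ‖a - w‖ < ε})
    ⟨_, ⊤, finrank_top ℂ V, fun a _ ↦ ⟨a, Submodule.mem_top, by simpa using hε⟩⟩

end EpsDim

section Complex

variable {V : Type*} [NormedAddCommGroup V] [NormedSpace ℂ V] [FiniteDimensional ℂ V]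
  [MeasurableSpace V] [BorelSpace V] (μ : Measure V) [μ.IsAddHaarMeasure] {A : Set V} {r ε : ℝ}

theorem MeasureTheory.Measure.addHaar_le_of_epsDim (hr : 0 ≤ r) (hε : 0 < ε)
    (hA : A ⊆ closedBall 0 r) :
    μ A ≤ ENNReal.ofReal (((2 * r + 3 * ε) / ε) ^ (2 * epsDim A ε)) *
      μ (closedBall 0 (2 * ε)) := by
  obtain ⟨W, hW, hAW⟩ := exists_submodule_finrank_eq_epsDim (A := A) hε
  have hWℝ : finrank ℝ (W.restrictScalars ℝ) = 2 * epsDim A ε := by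
    rw [← hW]; exact finrank_real_of_complex W
  simpa only [hWℝ] using
    μ.addHaar_le_of_forall_exists_mem_submodule (W := W.restrictScalars ℝ) hr hε hA hAW

theorem MeasureTheory.Measure.addHaar_rpow_le_of_epsDim (hball : μ (closedBall 0 1) = 1)
    (hA : A ⊆ closedBall 0 1) (hε : 0 < ε) (hV : finrank ℂ V ≠ 0) :
    (μ A).toReal ^ (1 / (2 * finrank ℂ V : ℝ)) ≤
      2 * ε * ((2 + 3 * ε) / ε) ^ ((epsDim A ε : ℝ) / finrank ℂ V) := by
  have h := μ.addHaar_le_of_epsDim zero_le_one hε hA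
  rw [Measure.addHaar_closedBall' μ 0 (by positivity), hball, mul_one, finrank_real_of_complex,
    mul_one, ← ENNReal.ofReal_mul (by positivity)] at h
  have := Real.rpow_one_div_le_of_le_pow_mul_pow ENNReal.toReal_nonneg (by positivity)
    (by positivity) (by positivity) (ENNReal.toReal_le_of_le_ofReal (by positivity) h)
  convert this using 3 <;> push_cast <;> ring

end Complex

theorem Real.logb_div_le_liminf_of_le_mul_rpow {ι : Type*} {l : Filter ι} [l.NeBot]
    {u β : ι → ℝ} {α b C : ℝ} (hα : 0 < α) (hb : 0 < b) (hC : 1 < C)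
    (hu : IsBoundedUnder (· ≤ ·) l u) (hβ : IsBoundedUnder (· ≥ ·) l β)
    (hβu : ∀ i, β i ≤ b * C ^ u i) (hαβ : α ≤ liminf β l) :
    Real.logb C (α / b) ≤ liminf u l := by
  refine le_of_forall_lt_imp_le_of_dense fun x hx ↦ le_liminf_of_le hu.isCoboundedUnder_ge ?_
  rw [Real.lt_logb_iff_rpow_lt hC (by positivity), lt_div_iff₀ hb, mul_comm] at hx
  filter_upwards [eventually_lt_of_lt_liminf (hx.trans_le hαβ) hβ] with i hi
  exact ((Real.rpow_lt_rpow_left_iff hC).1 <|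
    lt_of_mul_lt_mul_left (hi.trans_le (hβu i)) hb.le).le

theorem Filter.Tendsto.div_tendsto_one_of_tendsto_sub {ι : Type*} {l : Filter ι} {f g : ι → ℝ}
    {c : ℝ} (hg : Tendsto g l atTop) (hfg : Tendsto (fun i ↦ f i - g i) l (𝓝 c)) :
    Tendsto (fun i ↦ f i / g i) l (𝓝 1) := by
  have := (hfg.div_atTop hg).const_add 1
  rw [add_zero] at this
  refine this.congr' ?_
  filter_upwards [hg.eventually_gt_atTop 0] with i hi
  field_simp
  ring

noncomputable def kappa (ε α : ℝ) : ℝ :=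
  max 0 (min 1 (Real.logb ((2 + 3 * ε) / ε) (α / (2 * ε))))

theorem kappa_mem_Icc (ε α : ℝ) : kappa ε α ∈ Set.Icc 0 1 :=
  ⟨le_max_left _ _, max_le zero_le_one (min_le_left _ _)⟩

theorem tendsto_kappa {α : ℝ} (hα : 0 < α) :
    Tendsto (fun ε ↦ kappa ε α) (𝓝[>] 0) (𝓝 1) := by
  have hlog : Tendsto (fun ε : ℝ ↦ Real.log (2 + 3 * ε)) (𝓝[>] 0) (𝓝 (Real.log (2 + 3 * 0))) :=
    (ContinuousAt.tendsto (by fun_prop (disch := norm_num))).mono_left nhdsWithin_le_nhds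
  have hbase : Tendsto (fun ε ↦ Real.log ((2 + 3 * ε) / ε)) (𝓝[>] 0) atTop := by
    refine (hlog.add_atTop (tendsto_neg_atBot_atTop.comp Real.tendsto_log_nhdsGT_zero)).congr' ?_
    filter_upwards [self_mem_nhdsWithin] with ε (hε : 0 < ε)
    rw [Real.log_div (by positivity) hε.ne', Function.comp_apply, sub_eq_add_neg]
  have hlogb : Tendsto (fun ε ↦ Real.logb ((2 + 3 * ε) / ε) (α / (2 * ε))) (𝓝[>] 0) (𝓝 1) := by
    refine hbase.div_tendsto_one_of_tendsto_sub <|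
      (tendsto_const_nhds (x := Real.log (α / 2))).sub hlog |>.congr' ?_
    filter_upwards [self_mem_nhdsWithin] with ε (hε : 0 < ε)
    rw [div_mul_eq_div_div, Real.log_div (by positivity) hε.ne',
      Real.log_div (by positivity) hε.ne']
    ring
  have := (tendsto_const_nhds (x := (0 : ℝ))).max ((tendsto_const_nhds (x := (1 : ℝ))).min hlogb)
  rwa [min_self, max_eq_right zero_le_one] at this

theorem volume_packing_dimension_lower_bound.{u} :
    ∃ κ : ℝ → ℝ → ℝ,
      (∀ ε α : ℝ, 0 < ε → 0 < α → κ ε α ∈ Set.Icc (0 : ℝ) 1) ∧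
      (∀ α : ℝ, 0 < α →
        Tendsto (fun ε => κ ε α) (nhdsWithin 0 (Set.Ioi (0 : ℝ))) (nhds 1)) ∧
      ∀ (V : ℕ → Type u)
        [∀ n, NormedAddCommGroup (V n)] [∀ n, NormedSpace ℂ (V n)]
        [∀ n, FiniteDimensional ℂ (V n)]
        [∀ n, MeasurableSpace (V n)] [∀ n, BorelSpace (V n)]
        (d : ℕ → ℕ) (hd : ∀ n, d n = Module.finrank ℂ (V n)) (hd0 : ∀ n, 0 < d n)
        (μ : ∀ n, Measure (V n)) (hHaar : ∀ n, (μ n).IsAddHaarMeasure)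
        (hball : ∀ n, μ n (closedBall (0 : V n) 1) = 1)
        (A : ∀ n, Set (V n)) (hAmeas : ∀ n, MeasurableSet (A n))
        (hAball : ∀ n, A n ⊆ closedBall (0 : V n) 1)
        (α ε : ℝ), 0 < α → 0 < ε →
        α ≤ atTop.liminf (fun n => ((μ n) (A n)).toReal ^ ((1 : ℝ) / (2 * d n))) →
        κ ε α ≤ atTop.liminf (fun n => (epsDim (A n) ε : ℝ) / d n) := by
  refine ⟨kappa, fun ε α _ _ ↦ kappa_mem_Icc ε α, fun α hα ↦ tendsto_kappa hα, ?_⟩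
  intro V _ _ _ _ _ d hd hd0 μ hHaar hball A _ hAball α ε hα hε hαβ
  have hu : ∀ n, (epsDim (A n) ε : ℝ) / d n ≤ 1 := fun n ↦
    div_le_one_of_le₀ (by exact_mod_cast hd n ▸ epsDim_le_finrank hε) (Nat.cast_nonneg _)
  have hub : IsBoundedUnder (· ≤ ·) atTop fun n ↦ (epsDim (A n) ε : ℝ) / d n :=
    isBoundedUnder_of ⟨1, hu⟩
  have hβ : ∀ n, ((μ n) (A n)).toReal ^ ((1 : ℝ) / (2 * d n)) ≤
      2 * ε * ((2 + 3 * ε) / ε) ^ ((epsDim (A n) ε : ℝ) / d n) := fun n ↦ by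
    have := hHaar n
    rw [hd n]
    exact (μ n).addHaar_rpow_le_of_epsDim (hball n) (hAball n) hε (hd n ▸ hd0 n).ne'
  have hlogb := Real.logb_div_le_liminf_of_le_mul_rpow hα (by positivity)
    ((one_lt_div hε).2 (by linarith)) hub
    (isBoundedUnder_of ⟨0, fun n ↦ Real.rpow_nonneg ENNReal.toReal_nonneg _⟩) hβ hαβ
  exact max_le (le_liminf_of_le hub.isCoboundedUnder_ge (.of_forall fun n ↦ by positivity))
    ((min_le_right _ _).trans hlogb)
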